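/- arXiv:1507.04234 — 3 statements merged into one kernel-verified Lean document; each statement's English description precedes it below -/
import Mathlib

section
/- Let δ be the directed cut function of a finite weighted digraph on vertex set V_J, and fix distinct vertices j₁, j₂ ∈ V_J. Define h(A) := δ(A ∪ {j₁}) + min over C ⊆ V_J ∖ (A ∪ {j₁,j₂}) of δ(C ∪ {j₂}), for A ⊆ V_J ∖ {j₁,j₂}. Then h is submodular: for all A,B ⊆ V_J ∖ {j₁,j₂}, h(A) + h(B) ≥ h(A∪B) + h(A∩B). -/
private lemma cut_submod {V : Type*} [Fintype V] [DecidableEq V]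
    (g : V → V → ℝ) (hg : ∀ i j, 0 ≤ g i j) (S T : Finset V) :
    (∑ i ∈ S ∪ T, ∑ j ∈ (S ∪ T)ᶜ, g i j) + (∑ i ∈ S ∩ T, ∑ j ∈ (S ∩ T)ᶜ, g i j)
      ≤ (∑ i ∈ S, ∑ j ∈ Sᶜ, g i j) + (∑ i ∈ T, ∑ j ∈ Tᶜ, g i j) := by
  have key : ∀ A : Finset V, (∑ i ∈ A, ∑ j ∈ Aᶜ, g i j)
      = ∑ i, ∑ j, (if i ∈ A then (1:ℝ) else 0) * ((if j ∈ A then 0 else 1) * g i j) := by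
    intro A
    rw [show (∑ i ∈ A, ∑ j ∈ Aᶜ, g i j)
        = ∑ i, if i ∈ A then (∑ j ∈ Aᶜ, g i j) else 0 by
      rw [Finset.sum_ite_mem, Finset.univ_inter]]
    refine Finset.sum_congr rfl fun i _ => ?_
    by_cases hi : i ∈ A
    · simp only [hi, if_true, one_mul]
      rw [show (∑ j ∈ Aᶜ, g i j) = ∑ j, if j ∈ Aᶜ then g i j else 0 by
        rw [Finset.sum_ite_mem, Finset.univ_inter]]
      refine Finset.sum_congr rfl fun j _ => ?_
      by_cases hjA : j ∈ A <;> simp [hjA]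
    · simp [hi]
  simp only [key]
  rw [← Finset.sum_add_distrib, ← Finset.sum_add_distrib]
  refine Finset.sum_le_sum fun i _ => ?_
  rw [← Finset.sum_add_distrib, ← Finset.sum_add_distrib]
  refine Finset.sum_le_sum fun j _ => ?_
  have := hg i j
  by_cases hiS : i ∈ S <;> by_cases hiT : i ∈ T <;>
    by_cases hjS : j ∈ S <;> by_cases hjT : j ∈ T <;>
    simp [Finset.mem_union, Finset.mem_inter, hiS, hiT, hjS, hjT] <;> linarith

/-- h(A) = δ(A ∪ {j₁}) + min_{C ⊆ V∖(A∪{j₁,j₂})} δ(C ∪ {j₂}) is submodular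
on subsets of V ∖ {j₁,j₂}. -/
theorem twoCut_aux_submodular {V : Type*} [Fintype V] [DecidableEq V]
    (g : V → V → ℝ) (hg : ∀ i j, 0 ≤ g i j)
    (δ : Finset V → ℝ)
    (hδ : ∀ A : Finset V, δ A = ∑ i ∈ A, ∑ j ∈ Aᶜ, g i j)
    (j₁ j₂ : V) (hj : j₁ ≠ j₂)
    (h : Finset V → ℝ)
    (hh : ∀ A : Finset V,
      h A = δ (insert j₁ A) +
        ((Finset.univ \ (insert j₁ (insert j₂ A))).powerset.inf'
          ⟨∅, Finset.empty_mem_powerset _⟩ (fun C => δ (insert j₂ C)))) :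
    ∀ A B : Finset V, j₁ ∉ A → j₂ ∉ A → j₁ ∉ B → j₂ ∉ B →
      h A + h B ≥ h (A ∪ B) + h (A ∩ B) := by
  have δsub : ∀ S T : Finset V, δ (S ∪ T) + δ (S ∩ T) ≤ δ S + δ T := by
    intro S T
    simp only [hδ]
    exact cut_submod g hg S T
  intro A B hA1 hA2 hB1 hB2
  -- part 1: the δ part
  have part1 : δ (insert j₁ (A ∪ B)) + δ (insert j₁ (A ∩ B))
      ≤ δ (insert j₁ A) + δ (insert j₁ B) := by
    have hu : insert j₁ A ∪ insert j₁ B = insert j₁ (A ∪ B) := by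
      ext x
      simp only [Finset.mem_union, Finset.mem_insert]; tauto
    have hi : insert j₁ A ∩ insert j₁ B = insert j₁ (A ∩ B) := by
      ext x
      simp only [Finset.mem_inter, Finset.mem_insert]; tauto
    have := δsub (insert j₁ A) (insert j₁ B)
    rw [hu, hi] at this; exact this
  -- part 2: the min part
  have hne : ∀ A : Finset V,
      ((Finset.univ \ (insert j₁ (insert j₂ A))).powerset : Finset (Finset V)).Nonempty :=
    fun A => ⟨∅, Finset.empty_mem_powerset _⟩
  obtain ⟨CA, hCA, hCAeq⟩ := Finset.exists_mem_eq_inf' (hne A) (fun C => δ (insert j₂ C))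
  obtain ⟨CB, hCB, hCBeq⟩ := Finset.exists_mem_eq_inf' (hne B) (fun C => δ (insert j₂ C))
  have hCA' : CA ⊆ Finset.univ \ insert j₁ (insert j₂ A) := Finset.mem_powerset.mp hCA
  have hCB' : CB ⊆ Finset.univ \ insert j₁ (insert j₂ B) := Finset.mem_powerset.mp hCB
  have memU : CA ∩ CB ∈ (Finset.univ \ (insert j₁ (insert j₂ (A ∪ B)))).powerset := by
    rw [Finset.mem_powerset]
    intro x hx
    have h1 := hCA' (Finset.mem_inter.mp hx).1
    have h2 := hCB' (Finset.mem_inter.mp hx).2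
    simp only [Finset.mem_sdiff, Finset.mem_insert, Finset.mem_union, Finset.mem_univ,
      true_and] at h1 h2 ⊢
    tauto
  have memI : CA ∪ CB ∈ (Finset.univ \ (insert j₁ (insert j₂ (A ∩ B)))).powerset := by
    rw [Finset.mem_powerset]
    intro x hx
    rcases Finset.mem_union.mp hx with hx' | hx'
    · have h1 := hCA' hx'
      simp only [Finset.mem_sdiff, Finset.mem_insert, Finset.mem_inter, Finset.mem_univ,
        true_and] at h1 ⊢
      tauto
    · have h1 := hCB' hx'
      simp only [Finset.mem_sdiff, Finset.mem_insert, Finset.mem_inter, Finset.mem_univ,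
        true_and] at h1 ⊢
      tauto
  have mU : (Finset.univ \ (insert j₁ (insert j₂ (A ∪ B)))).powerset.inf'
      ⟨∅, Finset.empty_mem_powerset _⟩ (fun C => δ (insert j₂ C))
      ≤ δ (insert j₂ (CA ∩ CB)) := Finset.inf'_le _ memU
  have mI : (Finset.univ \ (insert j₁ (insert j₂ (A ∩ B)))).powerset.inf'
      ⟨∅, Finset.empty_mem_powerset _⟩ (fun C => δ (insert j₂ C))
      ≤ δ (insert j₂ (CA ∪ CB)) := Finset.inf'_le _ memI
  have δ2 : δ (insert j₂ (CA ∪ CB)) + δ (insert j₂ (CA ∩ CB))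
      ≤ δ (insert j₂ CA) + δ (insert j₂ CB) := by
    have hu : insert j₂ CA ∪ insert j₂ CB = insert j₂ (CA ∪ CB) := by
      ext x
      simp only [Finset.mem_union, Finset.mem_insert]; tauto
    have hi : insert j₂ CA ∩ insert j₂ CB = insert j₂ (CA ∩ CB) := by
      ext x
      simp only [Finset.mem_inter, Finset.mem_insert]; tauto
    have := δsub (insert j₂ CA) (insert j₂ CB)
    rw [hu, hi] at this; exact this
  simp only [hh, ge_iff_le] at *
  linarith
end

section
/- Let m, K, K' and opt be natural numbers with K ≤ K' ≤ opt ≤ m. Set cost(y) := 28m − K, opt(ψ) := 28m − opt, and cost(x) any value with |cost(x) − opt| ≤ |K' − opt|. Then |cost(x) − opt| ≤ |cost(y) − opt(ψ)|. -/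
/-- The linear-reduction error bound: with K ≤ K' ≤ opt ≤ m,
cost(y) = 28m − K, opt(ψ) = 28m − opt and |cost(x) − opt| ≤ |K' − opt|, we get
|cost(x) − opt| ≤ |cost(y) − opt(ψ)|. -/
theorem linear_reduction_beta (m K K' opt : ℕ)
    (h1 : K ≤ K') (h2 : K' ≤ opt) (h3 : opt ≤ m)
    (costx costy optψ : ℝ)
    (hy : costy = 28 * (m : ℝ) - K)
    (hψ : optψ = 28 * (m : ℝ) - opt)
    (hx : |costx - (opt : ℝ)| ≤ |(K' : ℝ) - opt|) :
    |costx - (opt : ℝ)| ≤ |costy - optψ| := by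
  have hK : (K : ℝ) ≤ K' := by exact_mod_cast h1
  have hK' : (K' : ℝ) ≤ opt := by exact_mod_cast h2
  refine hx.trans ?_
  rw [hy, hψ, abs_sub_comm, abs_of_nonneg (by linarith), abs_of_nonneg (by linarith)]
  linarith
end

section
/- Let T be a spanning tree of a connected graph G such that every edge of T lies in at most F fundamental cycles (with respect to T). Suppose an embedding X maps every non-tree edge uv of G to a path whose cost is at most the sum of the costs (under the tree-optimal embedding) of the tree edges on the tree path between u and v. Then the total cost of X satisfies ℂ(X) ≤ (1 + F)·ℂ(T), where ℂ(T) is the total cost of the tree edges. Consequently, since ℂ(T) ≤ ℂ(opt(G)), the embedding X is an (F+1)-approximation of the minimum cost embedding of G. -/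
/-- Spanning-tree based approximation: if every tree edge lies in at
most F fundamental paths, the embedding X obtained from the tree-optimal embedding
satisfies ℂ(X) ≤ (1+F)·ℂ(T) ≤ (F+1)·ℂ(opt(G)). -/
theorem spanning_tree_approximation {Edge : Type*} [Fintype Edge] [DecidableEq Edge]
    (T : Finset Edge) (F : ℕ)
    (σ : Edge → Finset Edge) (hσ : ∀ f ∉ T, σ f ⊆ T)
    (cT cX : Edge → ℝ) (hcT : ∀ e, 0 ≤ cT e) (hcX : ∀ e, 0 ≤ cX e)
    (htree : ∀ e ∈ T, cX e = cT e)
    (hnontree : ∀ f ∉ T, cX f ≤ ∑ e ∈ σ f, cT e)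
    (hF : ∀ e ∈ T, ((Tᶜ).filter (fun f => e ∈ σ f)).card ≤ F)
    (Copt : ℝ) (hopt : (∑ e ∈ T, cT e) ≤ Copt) :
    (∑ e, cX e) ≤ (1 + (F : ℝ)) * (∑ e ∈ T, cT e) ∧
      (∑ e, cX e) ≤ ((F : ℝ) + 1) * Copt := by
  have hTnn : 0 ≤ ∑ e ∈ T, cT e := Finset.sum_nonneg fun e _ => hcT e
  have hsplit : (∑ e, cX e) = (∑ e ∈ T, cX e) + ∑ e ∈ Tᶜ, cX e :=
    (Finset.sum_add_sum_compl T cX).symm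
  have h1 : (∑ e ∈ T, cX e) = ∑ e ∈ T, cT e := Finset.sum_congr rfl htree
  have h2 : (∑ f ∈ Tᶜ, cX f) ≤ ∑ f ∈ Tᶜ, ∑ e ∈ σ f, cT e :=
    Finset.sum_le_sum fun f hf => hnontree f (Finset.mem_compl.mp hf)
  have h3 : (∑ f ∈ Tᶜ, ∑ e ∈ σ f, cT e)
      = ∑ e ∈ T, ((Tᶜ).filter (fun f => e ∈ σ f)).card * cT e := by
    have : ∀ f ∈ Tᶜ, (∑ e ∈ σ f, cT e) = ∑ e ∈ T, if e ∈ σ f then cT e else 0 := by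
      intro f hf
      rw [Finset.sum_ite_mem, Finset.inter_eq_right.mpr (hσ f (Finset.mem_compl.mp hf))]
    rw [Finset.sum_congr rfl this, Finset.sum_comm]
    refine Finset.sum_congr rfl fun e _ => ?_
    rw [Finset.sum_ite, Finset.sum_const_zero, add_zero, Finset.sum_const, nsmul_eq_mul]
  have h4 : (∑ e ∈ T, (((Tᶜ).filter (fun f => e ∈ σ f)).card : ℝ) * cT e)
      ≤ ∑ e ∈ T, (F : ℝ) * cT e := by
    refine Finset.sum_le_sum fun e he => ?_
    exact mul_le_mul_of_nonneg_right (Nat.cast_le.mpr (hF e he)) (hcT e)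
  have key : (∑ e, cX e) ≤ (1 + (F : ℝ)) * (∑ e ∈ T, cT e) := by
    rw [hsplit, h1]
    have := h2.trans (le_of_eq h3)
    calc (∑ e ∈ T, cT e) + ∑ f ∈ Tᶜ, cX f
        ≤ (∑ e ∈ T, cT e) + ∑ e ∈ T, (F : ℝ) * cT e := by
          push_cast at h3 h4 ⊢
          linarith [h2.trans (le_of_eq h3)]
      _ = (1 + (F : ℝ)) * (∑ e ∈ T, cT e) := by
          rw [← Finset.mul_sum]; ring
  refine ⟨key, key.trans ?_⟩
  rw [add_comm]
  exact mul_le_mul_of_nonneg_left hopt (by positivity)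
end
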